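/- arXiv:1402.1322 — 4 statements merged into one kernel-verified Lean document; each statement's English description precedes it below -/
import Mathlib

section
/- Let G be a group and x ∈ G an element whose order is divisible by p^m·q^n for distinct primes p, q with m, n ≥ 1. Then the power graph of G contains a complete subgraph (clique) on p^m − 1 + φ(p^m·q^n) vertices, where φ is the Euler totient function; namely, the elements of ⟨x⟩ of order dividing p^m together with the elements of ⟨x⟩ of order exactly p^m·q^n form such a clique. -/
/-- The power graph of a group: distinct `a, b` adjacent iff one is a power of the other. -/
def powerGraph (G : Type*) [Group G] : SimpleGraph G :=
  SimpleGraph.fromRel (fun a b => a ∈ Subgroup.zpowers b)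

/-- The proper power graph: the power graph restricted to nontrivial elements. -/
def properPowerGraph (G : Type*) [Group G] : SimpleGraph {g : G // g ≠ 1} :=
  SimpleGraph.fromRel (fun a b => (a : G) ∈ Subgroup.zpowers (b : G))

/-!
In the finite cyclic group `⟨x⟩`, `a` is a power of `b` as soon as `orderOf a ∣ orderOf b`:
the `orderOf b` elements of `⟨b⟩` already exhaust the at most `orderOf b` solutions of
`c ^ orderOf b = 1`. Hence elements of `⟨x⟩` whose orders form a divisibility chain are pairwise
adjacent, and the orders occurring here (the divisors `≠ 1` of `p ^ m`, and `p ^ m * q ^ n`) do.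
For the count, `⟨x⟩` has `φ d` elements of order `d` for every `d ∣ orderOf x`, and
`∑ φ d = p ^ m - 1` over the divisors `d ≠ 1` of `p ^ m`.
-/

open Subgroup Finset Nat

lemma Nat.isChain_dvd_divisors_prime_pow {p : ℕ} (hp : p.Prime) (m : ℕ) :
    IsChain (· ∣ ·) ((p ^ m).divisors : Set ℕ) := by
  intro a ha b hb _
  obtain ⟨i, -, rfl⟩ := (Nat.dvd_prime_pow hp).mp (Nat.dvd_of_mem_divisors ha)
  obtain ⟨j, -, rfl⟩ := (Nat.dvd_prime_pow hp).mp (Nat.dvd_of_mem_divisors hb)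
  exact (le_total i j).imp (pow_dvd_pow p) (pow_dvd_pow p)

lemma Nat.sum_totient_divisors_erase_one {n : ℕ} (hn : n ≠ 0) :
    ∑ d ∈ n.divisors.erase 1, φ d = n - 1 := by
  have h := Nat.sum_totient n
  rw [← add_sum_erase _ _ (Nat.one_mem_divisors.mpr hn), totient_one] at h
  omega

section Cyclic

variable {α : Type*} [Group α] [Finite α] [IsCyclic α]

lemma IsCyclic.mem_zpowers_of_orderOf_dvd {a b : α} (h : orderOf a ∣ orderOf b) :
    a ∈ zpowers b := by
  classical
  cases nonempty_fintype α
  have hsub : (zpowers b : Set α) ⊆ {c | c ^ orderOf b = 1} := fun c hc =>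
    orderOf_dvd_iff_pow_eq_one.mp (orderOf_dvd_of_mem_zpowers hc)
  have hzpowers : (zpowers b : Set α).ncard = orderOf b := by
    rw [← Nat.card_coe_set_eq, SetLike.coe_sort_coe, Nat.card_zpowers]
  have hpow : {c : α | c ^ orderOf b = 1}.ncard ≤ orderOf b := by
    rw [Set.ncard_eq_toFinset_card', Set.toFinset_ofPred]
    exact IsCyclic.card_pow_eq_one_le (orderOf_pos b)
  suffices a ∈ (zpowers b : Set α) from this
  rw [Set.eq_of_subset_of_ncard_le hsub (hzpowers ▸ hpow) (Set.toFinite _)]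
  exact orderOf_dvd_iff_pow_eq_one.mp h

lemma IsCyclic.ncard_setOf_orderOf_mem {D : Finset ℕ} (hD : ∀ d ∈ D, d ∣ Nat.card α) :
    {a : α | orderOf a ∈ D}.ncard = ∑ d ∈ D, φ d := by
  classical
  cases nonempty_fintype α
  rw [Set.ncard_eq_toFinset_card', Set.toFinset_ofPred,
    card_eq_sum_card_fiberwise (f := orderOf) (t := D) fun a ha => by simpa using ha]
  refine sum_congr rfl fun d hd => ?_
  rw [filter_filter, ← IsCyclic.card_orderOf_eq_totient
    (by simpa only [Nat.card_eq_fintype_card] using hD d hd)]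
  congr 1
  ext a
  simp only [mem_filter, mem_univ, true_and, and_iff_right_iff_imp]
  rintro rfl
  exact hd

end Cyclic

section PowerGraph

variable {G : Type*} [Group G] {x : G}

lemma IsOfFinOrder.mem_zpowers_of_orderOf_dvd (hx : IsOfFinOrder x) {a b : G}
    (ha : a ∈ zpowers x) (hb : b ∈ zpowers x) (h : orderOf a ∣ orderOf b) :
    a ∈ zpowers b := by
  have : Finite (zpowers x) := (finite_zpowers.mpr hx).to_subtype
  have hmem : (⟨a, ha⟩ : zpowers x) ∈ zpowers ⟨b, hb⟩ :=
    IsCyclic.mem_zpowers_of_orderOf_dvd (by simpa only [Subgroup.orderOf_mk] using h)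
  simpa [MonoidHom.map_zpowers] using mem_map_of_mem (zpowers x).subtype hmem

lemma IsOfFinOrder.isClique_powerGraph_of_isChain (hx : IsOfFinOrder x) {D : Set ℕ}
    (hD : IsChain (· ∣ ·) D) :
    (powerGraph G).IsClique {g | g ∈ zpowers x ∧ orderOf g ∈ D} := by
  rintro a ⟨ha, haD⟩ b ⟨hb, hbD⟩ hab
  refine ⟨hab, ?_⟩
  rcases hD.total haD hbD with h | h
  exacts [Or.inl (hx.mem_zpowers_of_orderOf_dvd ha hb h),
    Or.inr (hx.mem_zpowers_of_orderOf_dvd hb ha h)]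

lemma IsOfFinOrder.ncard_setOf_orderOf_mem (hx : IsOfFinOrder x) {D : Finset ℕ}
    (hD : ∀ d ∈ D, d ∣ orderOf x) :
    {g | g ∈ zpowers x ∧ orderOf g ∈ D}.ncard = ∑ d ∈ D, φ d := by
  have : Finite (zpowers x) := (finite_zpowers.mpr hx).to_subtype
  have himage : {g | g ∈ zpowers x ∧ orderOf g ∈ D} =
      Subtype.val '' {h : zpowers x | orderOf h ∈ D} := by
    ext g
    simp only [Set.mem_image, Set.mem_ofPred_eq, Subtype.exists, Subgroup.orderOf_mk,
      exists_prop, exists_eq_right_right]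
  rw [himage, Set.ncard_image_of_injective _ Subtype.val_injective,
    IsCyclic.ncard_setOf_orderOf_mem (by simpa only [Nat.card_zpowers] using hD)]

end PowerGraph

theorem stmt_1_general {G : Type*} [Group G] (x : G) (p q m n : ℕ)
    (hp : p.Prime) (hq : q.Prime) (hn : 1 ≤ n)
    (hfin : 0 < orderOf x) (hdvd : p ^ m * q ^ n ∣ orderOf x) :
    (powerGraph G).IsClique
      {g : G | g ∈ Subgroup.zpowers x ∧
        ((orderOf g ∣ p ^ m ∧ g ≠ 1) ∨ orderOf g = p ^ m * q ^ n)} ∧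
    Set.ncard {g : G | g ∈ Subgroup.zpowers x ∧
        ((orderOf g ∣ p ^ m ∧ g ≠ 1) ∨ orderOf g = p ^ m * q ^ n)} =
      p ^ m - 1 + Nat.totient (p ^ m * q ^ n) := by
  have hx : IsOfFinOrder x := orderOf_pos_iff.mp hfin
  have hpm : p ^ m ≠ 0 := pow_ne_zero m hp.ne_zero
  set D : Finset ℕ := insert (p ^ m * q ^ n) ((p ^ m).divisors.erase 1)
  have hS : {g : G | g ∈ zpowers x ∧
      ((orderOf g ∣ p ^ m ∧ g ≠ 1) ∨ orderOf g = p ^ m * q ^ n)} =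
      {g | g ∈ zpowers x ∧ orderOf g ∈ D} := by
    ext g
    simp only [D, Set.mem_ofPred_eq, mem_insert, mem_erase, Nat.mem_divisors, ne_eq,
      orderOf_eq_one_iff, hpm, not_false_eq_true, and_true]
    tauto
  have hdvd_mul : ∀ d ∈ (p ^ m).divisors.erase 1, d ∣ p ^ m * q ^ n := fun d hd =>
    (Nat.dvd_of_mem_divisors (mem_of_mem_erase hd)).trans (dvd_mul_right _ _)
  have hnotmem : p ^ m * q ^ n ∉ (p ^ m).divisors.erase 1 := fun h =>
    (Nat.le_of_dvd (Nat.pos_of_ne_zero hpm) (Nat.dvd_of_mem_divisors (mem_of_mem_erase h))).not_gt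
      (lt_mul_of_one_lt_right (Nat.pos_of_ne_zero hpm) (Nat.one_lt_pow (by omega) hq.one_lt))
  rw [hS]
  refine ⟨hx.isClique_powerGraph_of_isChain ?_, ?_⟩
  · rw [coe_insert]
    exact ((Nat.isChain_dvd_divisors_prime_pow hp m).mono (erase_subset _ _)).insert
      fun d hd _ => Or.inr (hdvd_mul d hd)
  · have hD_dvd : ∀ d ∈ D, d ∣ orderOf x := by
      simpa only [D, forall_mem_insert] using ⟨hdvd, fun d hd => (hdvd_mul d hd).trans hdvd⟩
    rw [hx.ncard_setOf_orderOf_mem hD_dvd, sum_insert hnotmem,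
      Nat.sum_totient_divisors_erase_one hpm, add_comm]

theorem stmt_1 {G : Type*} [Group G] (x : G) (p q m n : ℕ)
    (hp : p.Prime) (hq : q.Prime) (hpq : p ≠ q) (hm : 1 ≤ m) (hn : 1 ≤ n)
    (hfin : 0 < orderOf x) (hdvd : p ^ m * q ^ n ∣ orderOf x) :
    (powerGraph G).IsClique
      {g : G | g ∈ Subgroup.zpowers x ∧
        ((orderOf g ∣ p ^ m ∧ g ≠ 1) ∨ orderOf g = p ^ m * q ^ n)} ∧
    Set.ncard {g : G | g ∈ Subgroup.zpowers x ∧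
        ((orderOf g ∣ p ^ m ∧ g ≠ 1) ∨ orderOf g = p ^ m * q ^ n)} =
      p ^ m - 1 + Nat.totient (p ^ m * q ^ n) :=
  stmt_1_general x p q m n hp hq hn hfin hdvd
end

section
/- If G is a group in which every element has order at most 6 (i.e., ω(G) ⊆ {1,2,3,4,5,6}), then the proper power graph P*(G) contains no clique of size 5. -/
/-!
Let `z` be an element of maximal order in a clique. Any other clique element `a` either lies
in `⟨z⟩`, or `⟨z⟩ ≤ ⟨a⟩` and then `⟨z⟩ = ⟨a⟩` by comparing orders. So a clique of five
nontrivial elements fills `⟨z⟩ \ {1}`, which forces `orderOf z = 6`; but then the clique contains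
`z ^ 2` and `z ^ 3`, of orders `3` and `2`, neither of which is a power of the other.
-/

open Subgroup

section

variable {G : Type*} [Group G]

theorem mem_zpowers_of_mem_zpowers_of_orderOf_le {a z : G} (ha : IsOfFinOrder a)
    (hz : z ∈ zpowers a) (hle : orderOf a ≤ orderOf z) : a ∈ zpowers z := by
  have : Finite (zpowers a) := ha.finite_zpowers.to_subtype
  have hzpowers : zpowers z = zpowers a :=
    eq_of_le_of_card_ge (zpowers_le.mpr hz) (by rwa [Nat.card_zpowers, Nat.card_zpowers])
  exact hzpowers ▸ mem_zpowers a

theorem ncard_zpowers_sdiff_one (g : G) :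
    ((zpowers g : Set G) \ {1}).ncard = orderOf g - 1 := by
  rw [Set.ncard_sdiff_singleton_of_mem (one_mem _), ← Nat.card_coe_set_eq, SetLike.coe_sort_coe,
    Nat.card_zpowers]

namespace properPowerGraph

theorem adj_iff {a b : {g : G // g ≠ 1}} :
    (properPowerGraph G).Adj a b ↔
      a ≠ b ∧ ((a : G) ∈ zpowers (b : G) ∨ (b : G) ∈ zpowers (a : G)) := by
  simp [properPowerGraph]

variable {s : Set {g : G // g ≠ 1}}

theorem orderOf_dvd_or_dvd_of_isClique (hs : (properPowerGraph G).IsClique s)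
    {a b : {g : G // g ≠ 1}} (ha : a ∈ s) (hb : b ∈ s) :
    orderOf (a : G) ∣ orderOf (b : G) ∨ orderOf (b : G) ∣ orderOf (a : G) := by
  obtain rfl | hab := eq_or_ne a b
  · exact Or.inl dvd_rfl
  · exact ((adj_iff.mp (hs ha hb hab)).2.imp orderOf_dvd_of_mem_zpowers
      orderOf_dvd_of_mem_zpowers)

theorem mem_zpowers_of_isClique (hs : (properPowerGraph G).IsClique s)
    {a z : {g : G // g ≠ 1}} (ha : a ∈ s) (hz : z ∈ s) (hfin : IsOfFinOrder (a : G))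
    (hle : orderOf (a : G) ≤ orderOf (z : G)) : (a : G) ∈ zpowers (z : G) := by
  obtain rfl | haz := eq_or_ne a z
  · exact mem_zpowers _
  · exact (adj_iff.mp (hs ha hz haz)).2.elim id
      (mem_zpowers_of_mem_zpowers_of_orderOf_le hfin · hle)

end properPowerGraph

end

theorem stmt_2 {G : Type*} [Group G]
    (h : ∀ g : G, 0 < orderOf g ∧ orderOf g ≤ 6) :
    ¬ ∃ s : Finset {g : G // g ≠ 1}, (properPowerGraph G).IsNClique 5 s := by
  rintro ⟨s, hs, hcard⟩
  have hfin (g : G) : IsOfFinOrder g := orderOf_pos_iff.mp (h g).1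
  obtain ⟨z, hz, hmax⟩ :=
    s.exists_max_image (fun a => orderOf (a : G)) (Finset.card_pos.mp (by omega))
  set t : Set G := Subtype.val '' (s : Set {g : G // g ≠ 1})
  have ht : t.ncard = 5 := by
    rw [Set.ncard_image_of_injective _ Subtype.val_injective, Set.ncard_coe_finset, hcard]
  have hsub : t ⊆ (zpowers (z : G) : Set G) \ {1} := by
    rintro _ ⟨a, ha, rfl⟩
    exact ⟨properPowerGraph.mem_zpowers_of_isClique hs ha hz (hfin a) (hmax a ha), a.2⟩
  have hz6 : orderOf (z : G) = 6 := by
    have := Set.ncard_le_ncard hsub (hfin z).finite_zpowers.sdiff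
    rw [ht, ncard_zpowers_sdiff_one] at this
    have := (h z).2
    omega
  have heq : t = (zpowers (z : G) : Set G) \ {1} :=
    Set.eq_of_subset_of_ncard_le hsub (by rw [ht, ncard_zpowers_sdiff_one, hz6])
      (hfin z).finite_zpowers.sdiff
  have hpow_mem {n : ℕ} (hn : orderOf ((z : G) ^ n) ≠ 1) : (z : G) ^ n ∈ t :=
    heq ▸ ⟨pow_mem (mem_zpowers _) n, fun h1 => hn (by rw [h1, orderOf_one])⟩
  have h2 : orderOf ((z : G) ^ 2) = 3 := by rw [orderOf_pow' _ two_ne_zero, hz6]; rfl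
  have h3 : orderOf ((z : G) ^ 3) = 2 := by rw [orderOf_pow' _ three_ne_zero, hz6]; rfl
  obtain ⟨a, ha, ha2⟩ := hpow_mem (n := 2) (by omega)
  obtain ⟨b, hb, hb3⟩ := hpow_mem (n := 3) (by omega)
  have hdvd := properPowerGraph.orderOf_dvd_or_dvd_of_isClique hs ha hb
  rw [ha2, hb3, h2, h3] at hdvd
  norm_num at hdvd
end

section
/- If G is a group such that the proper power graph P*(G) contains no clique of size 5, then every element of G has finite order at most 6. -/
open Finset Subgroup

theorem Nat.four_le_totient {n : ℕ} (hn : 7 ≤ n) : 4 ≤ n.totient := by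
  obtain ⟨a, ha1, ha2, hcop⟩ : ∃ a, 1 < a ∧ 2 * a < n ∧ n.Coprime a := by
    rcases Nat.even_or_odd' n with ⟨m, rfl | rfl⟩
    · rcases Nat.even_or_odd m with hm | hm
      · refine ⟨m - 1, by omega, by omega, Nat.Coprime.mul_left ?_ ?_⟩
        · exact Nat.coprime_two_left.mpr (Nat.Even.sub_odd (by omega) hm odd_one)
        · exact (Nat.coprime_self_sub_right (by omega)).mpr (Nat.coprime_one_right m)
      · refine ⟨m - 2, by omega, by omega, Nat.Coprime.mul_left ?_ ?_⟩
        · exact Nat.coprime_two_left.mpr (Nat.Odd.sub_even (by omega) hm even_two)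
        · exact (Nat.coprime_self_sub_right (by omega)).mpr (Nat.coprime_two_right.mpr hm)
    · exact ⟨2, one_lt_two, by omega, Nat.coprime_two_right.mpr (odd_two_mul_add_one m)⟩
  have hsub : {1, a, n - a, n - 1} ⊆ {k ∈ range n | n.Coprime k} := by
    have hcop_sub_one := (Nat.coprime_self_sub_right (by omega : 1 ≤ n)).mpr (Nat.coprime_one_right n)
    have hcop_sub_a := (Nat.coprime_self_sub_right (by omega : a ≤ n)).mpr hcop
    simp only [insert_subset_iff, singleton_subset_iff, mem_filter, mem_range]
    exact ⟨⟨by omega, Nat.coprime_one_right n⟩, ⟨by omega, hcop⟩, ⟨by omega, hcop_sub_a⟩,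
      ⟨by omega, hcop_sub_one⟩⟩
  calc 4 = #{1, a, n - a, n - 1} := by
        rw [card_insert_of_notMem, card_insert_of_notMem, card_pair] <;> simp <;> omega
    _ ≤ n.totient := card_le_card hsub

section PowerGraph

variable {G : Type*} [Group G]

theorem not_cliqueFree_properPowerGraph_of_isClique {s : Finset G} (h1 : (1 : G) ∉ s)
    (hs : (powerGraph G).IsClique (s : Set G)) :
    ¬ (properPowerGraph G).CliqueFree #s := by
  classical
  intro hfree
  refine hfree (s.subtype (· ≠ 1)) ⟨?_, ?_⟩
  · intro x hx y hy hxy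
    have hadj := hs (mem_subtype.mp hx) (mem_subtype.mp hy) (Subtype.coe_ne_coe.mpr hxy)
    exact SimpleGraph.fromRel_adj _ _ _ |>.mpr ⟨hxy, (SimpleGraph.fromRel_adj _ _ _).mp hadj |>.2⟩
  · rw [card_subtype, filter_true_of_mem fun x hx => ne_of_mem_of_not_mem hx h1]

theorem not_cliqueFree_properPowerGraph_of_injOn {ι : Type*} {f : ι → G} {S : Finset ι}
    (hinj : Set.InjOn f S) (h1 : ∀ i ∈ S, f i ≠ 1)
    (hS : (S : Set ι).Pairwise fun i j => f i ∈ zpowers (f j) ∨ f j ∈ zpowers (f i)) :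
    ¬ (properPowerGraph G).CliqueFree #S := by
  classical
  rw [← card_image_of_injOn hinj]
  refine not_cliqueFree_properPowerGraph_of_isClique (by simpa using h1) ?_
  rw [coe_image, SimpleGraph.IsClique, hinj.pairwise_image]
  exact fun i hi j hj hij => (SimpleGraph.fromRel_adj _ _ _).mpr ⟨hinj.ne hi hj hij, hS hi hj hij⟩

theorem mem_zpowers_pow_of_coprime {g y : G} {k : ℕ} (hk : k.Coprime (orderOf g))
    (hy : y ∈ zpowers g) : y ∈ zpowers (g ^ k) := by
  obtain ⟨m, hm⟩ := exists_pow_eq_self_of_coprime hk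
  exact zpowers_le.mpr (mem_zpowers_iff.mpr ⟨m, by rw [zpow_natCast, hm]⟩) hy

theorem not_cliqueFree_properPowerGraph_of_not_isOfFinOrder {g : G} (hg : ¬ IsOfFinOrder g)
    (n : ℕ) : ¬ (properPowerGraph G).CliqueFree n := by
  have hinj : Function.Injective fun i : ℕ => g ^ 2 ^ i :=
    (injective_pow_iff_not_isOfFinOrder.mpr hg).comp (Nat.pow_right_injective le_rfl)
  have hdvd {i j : ℕ} (hij : i ≤ j) : g ^ 2 ^ j ∈ zpowers (g ^ 2 ^ i) := by
    obtain ⟨c, hc⟩ := pow_dvd_pow 2 hij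
    rw [hc, pow_mul]
    exact npow_mem_zpowers _ c
  simpa using not_cliqueFree_properPowerGraph_of_injOn (S := range n) hinj.injOn
    (fun i _ h => pow_ne_zero i two_ne_zero <|
      injective_pow_iff_not_isOfFinOrder.mpr hg (h.trans (pow_zero g).symm))
    (fun i _ j _ _ => (le_total j i).imp hdvd hdvd)

theorem not_cliqueFree_properPowerGraph_of_le_totient {g : G} {k : ℕ}
    (hk : k ≤ (orderOf g).totient) (hkn : k + 1 < orderOf g) :
    ¬ (properPowerGraph G).CliqueFree (k + 1) := by
  classical
  obtain ⟨T, hT, rfl⟩ := exists_subset_card_eq hk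
  have hT' (i : ℕ) (hi : i ∈ T) : i.Coprime (orderOf g) ∧ i ∈ Ico 1 (orderOf g) := by
    obtain ⟨hlt, hcop⟩ := mem_filter.mp (hT hi)
    have : i ≠ 0 := by rintro rfl; rw [Nat.coprime_zero_right] at hcop; omega
    exact ⟨hcop.symm, mem_Ico.mpr ⟨by omega, mem_range.mp hlt⟩⟩
  have hcard : #T < #(Ico 1 (orderOf g)) := by rw [Nat.card_Ico]; omega
  obtain ⟨e, he, heT⟩ := exists_mem_notMem_of_card_lt_card hcard
  have hbounds (i : ℕ) (hi : i ∈ insert e T) : 0 < i ∧ i < orderOf g := by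
    rcases mem_insert.mp hi with rfl | hi
    · exact mem_Ico.mp he
    · exact mem_Ico.mp (hT' i hi).2
  have hgen (i : ℕ) (hi : i ∈ T) (j : ℕ) : g ^ j ∈ zpowers (g ^ i) :=
    mem_zpowers_pow_of_coprime (hT' i hi).1 (npow_mem_zpowers g j)
  rw [← card_insert_of_notMem heT]
  refine not_cliqueFree_properPowerGraph_of_injOn (f := (g ^ ·))
    (pow_injOn_Iio_orderOf.mono fun i hi => (hbounds i hi).2)
    (fun i hi => pow_ne_one_of_lt_orderOf (hbounds i hi).1.ne' (hbounds i hi).2) ?_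
  intro i hi j hj hij
  by_cases hiT : i ∈ T
  · exact Or.inr (hgen i hiT j)
  · have hie : i = e := (mem_insert.mp hi).resolve_right hiT
    have hjT : j ∈ T := (mem_insert.mp hj).resolve_left (hie ▸ hij.symm)
    exact Or.inl (hgen j hjT i)

end PowerGraph

theorem stmt_3 {G : Type*} [Group G]
    (h : ¬ ∃ s : Finset {g : G // g ≠ 1}, (properPowerGraph G).IsNClique 5 s) :
    ∀ g : G, 0 < orderOf g ∧ orderOf g ≤ 6 := by
  have hfree : (properPowerGraph G).CliqueFree 5 := fun s hs => h ⟨s, hs⟩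
  intro g
  by_cases hg : IsOfFinOrder g
  · refine ⟨hg.orderOf_pos, ?_⟩
    by_contra! h7
    exact not_cliqueFree_properPowerGraph_of_le_totient (Nat.four_le_totient h7) (by omega) hfree
  · exact absurd hfree (not_cliqueFree_properPowerGraph_of_not_isOfFinOrder hg 5)
end

section
/- Let G be a group such that the proper power graph P*(G) contains no subgraph isomorphic to the complete bipartite graph K_{3,3}. Then every element of G has finite order at most 6. -/
/-!
If `g` has infinite order or finite order `n ≥ 7`, a `K₃,₃` already sits inside `⟨g⟩`: each of
`g, g⁻¹, g²` has `g⁻², g⁴, g⁻⁴` among its powers, and these six powers and `1` are pairwise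
distinct unless `n ∣ d` for some `d ∈ {1, …, 6, 8}`, i.e. unless `n = 8`. For `n = 8` the generator
`g³` takes the place of `g²`, with `g⁶, g⁻⁶, g¹²` on the other side.
-/

open Finset

def SimpleGraph.ContainsK33 {V : Type*} (Γ : SimpleGraph V) : Prop :=
  ∃ A B : Finset V, #A = 3 ∧ #B = 3 ∧ Disjoint A B ∧ ∀ a ∈ A, ∀ b ∈ B, Γ.Adj a b

section

variable {G : Type*} [Group G]

lemma properPowerGraph_adj_of_mem_zpowers {a b : {g : G // g ≠ 1}} (hab : a ≠ b)
    (h : (b : G) ∈ Subgroup.zpowers (a : G)) : (properPowerGraph G).Adj a b := by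
  rw [properPowerGraph, SimpleGraph.fromRel_adj]
  exact ⟨hab, Or.inr h⟩

lemma containsK33_properPowerGraph {A B : Finset G} (hA : #A = 3) (hB : #B = 3)
    (hAB : Disjoint A B) (hA1 : 1 ∉ A) (hB1 : 1 ∉ B)
    (hpow : ∀ a ∈ A, ∀ b ∈ B, b ∈ Subgroup.zpowers a) :
    (properPowerGraph G).ContainsK33 := by
  classical
  have card_subtype_ne_one {s : Finset G} (hs : 1 ∉ s) : #(s.subtype (· ≠ 1)) = #s := by
    rw [card_subtype, filter_true_of_mem]
    rintro x hx rfl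
    exact hs hx
  refine ⟨A.subtype (· ≠ 1), B.subtype (· ≠ 1), ?_, ?_, ?_, ?_⟩
  · rw [card_subtype_ne_one hA1, hA]
  · rw [card_subtype_ne_one hB1, hB]
  · rw [disjoint_left]
    intro x hxA hxB
    exact disjoint_left.1 hAB (mem_subtype.1 hxA) (mem_subtype.1 hxB)
  · intro a ha b hb
    have ha := mem_subtype.1 ha
    have hb := mem_subtype.1 hb
    refine properPowerGraph_adj_of_mem_zpowers ?_ (hpow _ ha _ hb)
    rintro rfl
    exact disjoint_left.1 hAB ha hb

lemma zpow_injOn_of_not_dvd_natAbs_sub {g : G} {S : Set ℤ}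
    (h : ∀ a ∈ S, ∀ b ∈ S, a ≠ b → ¬ orderOf g ∣ (a - b).natAbs) :
    Set.InjOn (g ^ · : ℤ → G) S := by
  intro a ha b hb hab
  by_contra hne
  exact h a ha b hb hne (Int.natCast_dvd.1 (zpow_eq_zpow_iff_modEq.1 hab.symm).dvd)

lemma containsK33_properPowerGraph_of_zpow (g : G) {A B : Finset ℤ} (hA : #A = 3) (hB : #B = 3)
    (hAB : Disjoint A B) (h0 : 0 ∉ A ∪ B) (hdvd : ∀ a ∈ A, ∀ b ∈ B, a ∣ b)
    (hinj : Set.InjOn (g ^ · : ℤ → G) ↑(insert 0 (A ∪ B))) :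
    (properPowerGraph G).ContainsK33 := by
  classical
  have hinjAB : Set.InjOn (g ^ · : ℤ → G) ↑(A ∪ B) := hinj.mono (by simp)
  have one_notMem_image {s : Finset ℤ} (hs : s ⊆ A ∪ B) : 1 ∉ s.image (g ^ ·) := by
    rw [mem_image]
    rintro ⟨k, hk, hk1⟩
    have hk0 : k = 0 :=
      hinj (by simpa using Or.inr (mem_union.1 (hs hk))) (by simp) (by simpa using hk1)
    exact h0 (hk0 ▸ hs hk)
  refine containsK33_properPowerGraph (A := A.image (g ^ ·)) (B := B.image (g ^ ·))
    ?_ ?_ ?_ ?_ ?_ ?_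
  · rw [card_image_of_injOn (hinjAB.mono (by simp)), hA]
  · rw [card_image_of_injOn (hinjAB.mono (by simp)), hB]
  · simp only [disjoint_left, mem_image, not_exists, not_and]
    rintro _ ⟨a, ha, rfl⟩ b hb hba
    have hba : b = a := hinjAB (by simp [hb]) (by simp [ha]) hba
    exact disjoint_left.1 hAB ha (hba ▸ hb)
  · exact one_notMem_image subset_union_left
  · exact one_notMem_image subset_union_right
  · simp only [mem_image]
    rintro _ ⟨a, ha, rfl⟩ _ ⟨b, hb, rfl⟩
    obtain ⟨k, rfl⟩ := hdvd a ha b hb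
    exact Subgroup.mem_zpowers_iff.2 ⟨k, (zpow_mul g a k).symm⟩

end

lemma not_dvd_of_le_eight {n d : ℕ} (hn : n = 0 ∨ 7 ≤ n) (hn8 : n ≠ 8) (hd0 : d ≠ 0)
    (hd8 : d ≤ 8) (hd7 : d ≠ 7) : ¬ n ∣ d := by
  intro h
  rcases hn with rfl | hn
  · exact hd0 (Nat.eq_zero_of_zero_dvd h)
  · have hnd := Nat.le_of_dvd (by omega) h
    obtain rfl : n = 7 := by omega
    omega

theorem stmt_5 {G : Type*} [Group G]
    (h : ¬ ∃ A B : Finset {g : G // g ≠ 1}, A.card = 3 ∧ B.card = 3 ∧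
      Disjoint A B ∧ ∀ a ∈ A, ∀ b ∈ B, (properPowerGraph G).Adj a b) :
    ∀ g : G, 0 < orderOf g ∧ orderOf g ≤ 6 := by
  intro g
  by_contra hg
  apply h
  rcases eq_or_ne (orderOf g) 8 with h8 | h8
  · refine containsK33_properPowerGraph_of_zpow g (A := {1, -1, 3}) (B := {6, -6, 12})
      (by decide) (by decide) (by decide) (by decide) (by decide) ?_
    exact zpow_injOn_of_not_dvd_natAbs_sub (by rw [h8]; decide)
  · refine containsK33_properPowerGraph_of_zpow g (A := {1, -1, 2}) (B := {-2, 4, -4})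
      (by decide) (by decide) (by decide) (by decide) (by decide) ?_
    have hdiff : ∀ a ∈ (insert 0 ({1, -1, 2} ∪ {-2, 4, -4}) : Finset ℤ),
        ∀ b ∈ (insert 0 ({1, -1, 2} ∪ {-2, 4, -4}) : Finset ℤ),
        a ≠ b → (a - b).natAbs ≤ 8 ∧ (a - b).natAbs ≠ 7 := by
      decide
    refine zpow_injOn_of_not_dvd_natAbs_sub fun a ha b hb hab => ?_
    obtain ⟨hd8, hd7⟩ := hdiff a ha b hb hab
    exact not_dvd_of_le_eight (by omega) h8 (by omega) hd8 hd7
end
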